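/- Let V, Q be real Hilbert spaces, A : V × V → ℝ bounded bilinear and coercive with constant a > 0, B : V × Q → ℝ bounded bilinear, and C : Q × Q → ℝ bounded bilinear with C(q,q) ≥ 0 for all q ∈ Q. Assume B satisfies the inf-sup condition: there is β > 0 with sup over nonzero v ∈ V of B(v,q)/‖v‖ ≥ β‖q‖ for all q ∈ Q. Then for every (f, g) ∈ V' × Q' the perturbed saddle-point problem — find (u, p) ∈ V × Q with A(u,v) + B(v,p) = f(v) for all v and B(u,q) − C(p,q) = g(q) for all q — has a unique solution. -/

import Mathlib

/-!
Lax–Milgram makes `A : V → V'` an isomorphism, so the first equation gives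
`u = A⁻¹ (f - Bᵀ p)`, and substituting into the second leaves the Schur complement equation
`(B A⁻¹ Bᵀ + C) p = B A⁻¹ f - g` on `Q`. The Schur complement is coercive: with
`w = A⁻¹ Bᵀ p` one has `⟨B A⁻¹ Bᵀ p, p⟩ = A(w, w) ≥ a ‖w‖² ≥ (a / ‖A‖²) ‖Bᵀ p‖²`, and the
inf-sup condition says `‖Bᵀ p‖ ≥ β ‖p‖`, while `C` only adds a nonnegative term. A second
application of Lax–Milgram solves for `p`.
-/

theorem LinearEquiv.existsUnique_saddle_point_of_bijective_schur
    {R M N M' N' : Type*} [Semiring R] [AddCommGroup M] [AddCommGroup N] [AddCommGroup M']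
    [AddCommGroup N'] [Module R M] [Module R N] [Module R M'] [Module R N']
    (A : M ≃ₗ[R] M') (B : M →ₗ[R] N') (Bt : N →ₗ[R] M') (C : N →ₗ[R] N')
    (hS : Function.Bijective fun p => B (A.symm (Bt p)) + C p) (f : M') (g : N') :
    ∃! up : M × N, A up.1 + Bt up.2 = f ∧ B up.1 - C up.2 = g := by
  have elim : ∀ u p, A u + Bt p = f ∧ B u - C p = g ↔
      u = A.symm (f - Bt p) ∧ B (A.symm (Bt p)) + C p = B (A.symm f) - g := by
    intro u p
    rw [A.eq_symm_apply, eq_sub_iff_add_eq]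
    refine and_congr_right fun h => ?_
    rw [← h, map_add, A.symm_apply_apply, map_add, add_sub_right_comm, add_comm (B _),
      add_left_inj]
    exact ⟨fun h => by rw [← h, sub_sub_cancel], fun h => by rw [h, sub_sub_cancel]⟩
  obtain ⟨p, hp, hp_unique⟩ := hS.existsUnique (B (A.symm f) - g)
  refine ⟨(A.symm (f - Bt p), p), (elim _ _).2 ⟨rfl, hp⟩, ?_⟩
  rintro ⟨u, q⟩ h
  obtain ⟨rfl, hq⟩ := (elim u q).1 h
  obtain rfl := hp_unique q hq
  rfl

theorem ContinuousLinearMap.iSup_div_norm_le_opNorm {E : Type*} [NormedAddCommGroup E]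
    [NormedSpace ℝ E] (φ : StrongDual ℝ E) : ⨆ v : {v : E // v ≠ 0}, φ v / ‖(v : E)‖ ≤ ‖φ‖ :=
  Real.iSup_le (fun v => div_le_of_le_mul₀ (norm_nonneg _) (norm_nonneg _)
    ((le_abs_self _).trans (φ.le_opNorm v))) (norm_nonneg φ)

section LaxMilgram

variable {V : Type*} [NormedAddCommGroup V] [InnerProductSpace ℝ V] [CompleteSpace V]
  {A : V →L[ℝ] V →L[ℝ] ℝ}

theorem IsCoercive.bijective (hA : IsCoercive A) : Function.Bijective A := by
  have : ⇑A = InnerProductSpace.toDual ℝ V ∘ hA.continuousLinearEquivOfBilin := by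
    ext u v
    simp
  rw [this]
  exact (InnerProductSpace.toDual ℝ V).bijective.comp hA.continuousLinearEquivOfBilin.bijective

noncomputable def IsCoercive.equivDual (hA : IsCoercive A) : V ≃L[ℝ] StrongDual ℝ V :=
  .ofBijective A (LinearMap.ker_eq_bot.mpr hA.bijective.1)
    (LinearMap.range_eq_top.mpr hA.bijective.2)

@[simp]
theorem IsCoercive.coe_equivDual (hA : IsCoercive A) : ⇑hA.equivDual = A :=
  ContinuousLinearEquiv.coeFn_ofBijective _ _ _

end LaxMilgram

section Schur

variable {V Q : Type*} [NormedAddCommGroup V] [NormedSpace ℝ V]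
  [NormedAddCommGroup Q] [NormedSpace ℝ Q]

theorem ContinuousLinearEquiv.mul_norm_sq_le_apply_symm {A : V ≃L[ℝ] StrongDual ℝ V} {a M : ℝ}
    (ha : 0 ≤ a) (hA : ∀ v, a * ‖v‖ ^ 2 ≤ A v v) (hM : ‖(A : V →L[ℝ] StrongDual ℝ V)‖ ≤ M)
    (φ : StrongDual ℝ V) : a * ‖φ‖ ^ 2 ≤ M ^ 2 * φ (A.symm φ) := by
  set w := A.symm φ
  have hφ : φ = A w := (A.apply_symm_apply φ).symm
  have hnorm : ‖φ‖ ≤ M * ‖w‖ := by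
    rw [hφ]
    exact ((A : V →L[ℝ] StrongDual ℝ V).le_opNorm w).trans
      (mul_le_mul_of_nonneg_right hM (norm_nonneg w))
  calc a * ‖φ‖ ^ 2 ≤ a * (M * ‖w‖) ^ 2 := by gcongr
    _ = M ^ 2 * (a * ‖w‖ ^ 2) := by ring
    _ ≤ M ^ 2 * A w w := by gcongr; exact hA w
    _ = M ^ 2 * φ w := by rw [← hφ]

noncomputable def schurComplement (A : V ≃L[ℝ] StrongDual ℝ V) (B : V →L[ℝ] Q →L[ℝ] ℝ)
    (C : Q →L[ℝ] Q →L[ℝ] ℝ) : Q →L[ℝ] Q →L[ℝ] ℝ :=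
  B ∘L (A.symm : StrongDual ℝ V →L[ℝ] V) ∘L B.flip + C

theorem schurComplement_apply (A : V ≃L[ℝ] StrongDual ℝ V) (B : V →L[ℝ] Q →L[ℝ] ℝ)
    (C : Q →L[ℝ] Q →L[ℝ] ℝ) (p : Q) :
    schurComplement A B C p = B (A.symm (B.flip p)) + C p :=
  rfl

theorem isCoercive_schurComplement {A : V ≃L[ℝ] StrongDual ℝ V} {B : V →L[ℝ] Q →L[ℝ] ℝ}
    {C : Q →L[ℝ] Q →L[ℝ] ℝ} {a β : ℝ} (ha : 0 < a) (hA : ∀ v, a * ‖v‖ ^ 2 ≤ A v v)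
    (hC : ∀ q, 0 ≤ C q q) (hβ : 0 < β) (hB : ∀ q, β * ‖q‖ ≤ ‖B.flip q‖) :
    IsCoercive (schurComplement A B C) := by
  -- any positive bound on `‖A‖` will do; the `+ 1` covers `A = 0`
  set M := ‖(A : V →L[ℝ] StrongDual ℝ V)‖ + 1
  refine ⟨a * β ^ 2 / M ^ 2, by positivity, fun p => ?_⟩
  have key := ContinuousLinearEquiv.mul_norm_sq_le_apply_symm ha.le hA
    (le_add_of_nonneg_right zero_le_one) (B.flip p)
  calc a * β ^ 2 / M ^ 2 * ‖p‖ * ‖p‖ = a * (β * ‖p‖) ^ 2 / M ^ 2 := by ring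
    _ ≤ a * ‖B.flip p‖ ^ 2 / M ^ 2 := by gcongr; exact hB p
    _ ≤ B.flip p (A.symm (B.flip p)) := by rw [div_le_iff₀' (by positivity)]; exact key
    _ ≤ schurComplement A B C p p := le_add_of_nonneg_right (hC p)

end Schur

/-- Abstract well-posedness of a perturbed saddle-point problem: `A` elliptic,
`C` positive semidefinite, `B` inf-sup stable; then for every `(f, g)` the problem
has a unique solution `(u, p)`. -/
theorem perturbed_saddle_point_wellposed
    {V Q : Type*} [NormedAddCommGroup V] [InnerProductSpace ℝ V] [CompleteSpace V]
    [NormedAddCommGroup Q] [InnerProductSpace ℝ Q] [CompleteSpace Q]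
    (A : V →L[ℝ] V →L[ℝ] ℝ) (B : V →L[ℝ] Q →L[ℝ] ℝ) (C : Q →L[ℝ] Q →L[ℝ] ℝ)
    (a : ℝ) (ha : 0 < a) (hA : ∀ v : V, a * ‖v‖ ^ 2 ≤ A v v)
    (hC : ∀ q : Q, 0 ≤ C q q)
    (β : ℝ) (hβ : 0 < β)
    (hinfsup : ∀ q : Q, β * ‖q‖ ≤ ⨆ v : {v : V // v ≠ 0}, B v q / ‖(v : V)‖) :
    ∀ (f : V →L[ℝ] ℝ) (g : Q →L[ℝ] ℝ),
      ∃! up : V × Q, (∀ v : V, A up.1 v + B v up.2 = f v) ∧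
        (∀ q : Q, B up.1 q - C up.2 q = g q) := by
  intro f g
  have hAcoer : IsCoercive A := ⟨a, ha, fun v => by simpa only [mul_assoc, sq] using hA v⟩
  have hB : ∀ q, β * ‖q‖ ≤ ‖B.flip q‖ := fun q =>
    (hinfsup q).trans (B.flip q).iSup_div_norm_le_opNorm
  have hA_dual : ∀ v, a * ‖v‖ ^ 2 ≤ hAcoer.equivDual v v := by
    simp only [IsCoercive.coe_equivDual]; exact hA
  have hS := (isCoercive_schurComplement ha hA_dual hC hβ hB).bijective
  simp only [funext (schurComplement_apply _ B C)] at hS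
  have := hAcoer.equivDual.toLinearEquiv.existsUnique_saddle_point_of_bijective_schur
    B.toLinearMap B.flip.toLinearMap C.toLinearMap hS f g
  simpa only [ContinuousLinearMap.ext_iff, ContinuousLinearEquiv.coe_toLinearEquiv,
    IsCoercive.coe_equivDual, ContinuousLinearMap.coe_coe, add_apply,
    sub_apply, ContinuousLinearMap.flip_apply] using this
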